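/- arXiv:2309.06429 — 4 statements merged into one kernel-verified Lean document; each statement's English description precedes it below -/
import Mathlib

section
/- Weak duality and primal–dual relation for the debiasing program: fix integers n, d ≥ 1, vectors X₁,…,Xₙ, x ∈ ℝ^d, reals π̂₁,…,π̂ₙ ≥ 0 and γ > 0. (i) For every w ∈ ℝⁿ feasible for the primal debiasing program and every ℓ ∈ ℝ^d, Σᵢ₌₁ⁿ π̂ᵢwᵢ² ≥ −[(1/(4n))Σᵢ₌₁ⁿ π̂ᵢ(Xᵢᵀℓ)² + xᵀℓ + (γ/n)‖ℓ‖₁]. (ii) If in addition π̂ᵢ > 0 for all i, strong duality holds in the sense that the infimum of Σᵢ₌₁ⁿ π̂ᵢwᵢ² over feasible w equals −inf_{ℓ∈ℝ^d}[(1/(4n))Σᵢ₌₁ⁿ π̂ᵢ(Xᵢᵀℓ)² + xᵀℓ + (γ/n)‖ℓ‖₁], ŵ is a feasible minimizer of the primal program, and ℓ̂ is a minimizer of the dual objective, then ŵᵢ = −(1/(2√n))·Xᵢᵀℓ̂ for every i = 1,…,n. -/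
open MeasureTheory ProbabilityTheory Filter Finset Asymptotics
open scoped ENNReal NNReal Topology Classical

noncomputable section

/-- Euclidean dot product on `ℝ^m`. -/
def dot {m : ℕ} (u v : Fin m → ℝ) : ℝ := ∑ j, u j * v j

/-- ℓ¹-norm on `ℝ^m`. -/
def l1 {m : ℕ} (v : Fin m → ℝ) : ℝ := ∑ j, |v j|

/-- ℓ²-norm on `ℝ^m`. -/
def l2 {m : ℕ} (v : Fin m → ℝ) : ℝ := Real.sqrt (∑ j, v j ^ 2)

/-- max-norm on `ℝ^m`. -/
def linf {m : ℕ} (v : Fin m → ℝ) : ℝ := ⨆ j, |v j|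

/-- number of nonzero coordinates. -/
def l0 {m : ℕ} (v : Fin m → ℝ) : ℕ := (Finset.univ.filter fun j => v j ≠ 0).card

/-- coordinate restriction of a vector to an index set. -/
def restr {m : ℕ} (S : Finset (Fin m)) (v : Fin m → ℝ) : Fin m → ℝ :=
  fun j => if j ∈ S then v j else 0

/-- cone of dominant coordinates w.r.t. the ℓ¹-norm. -/
def cone1 {m : ℕ} (S : Finset (Fin m)) (t : ℝ) : Set (Fin m → ℝ) :=
  {v | l1 (restr Sᶜ v) ≤ t * l1 (restr S v)}

/-- cone of dominant coordinates w.r.t. the ℓ²-norm. -/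
def cone2 {m : ℕ} (S : Finset (Fin m)) (t : ℝ) : Set (Fin m → ℝ) :=
  {v | l2 (restr Sᶜ v) ≤ t * l2 (restr S v)}

/-- ψ_a-Orlicz norm of a real random variable (with `sInf ∅ = ∞`). -/
def psiNorm {Ω : Type*} [MeasurableSpace Ω] (a : ℝ) (μ : Measure Ω) (Z : Ω → ℝ) : ℝ≥0∞ :=
  sInf {t : ℝ≥0∞ | 0 < t ∧ t ≠ ∞ ∧
    ∫⁻ ω, ENNReal.ofReal (Real.exp (|Z ω| ^ a / t.toReal ^ a)) ∂μ ≤ 2}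

/-- sub-Gaussian random vector with constant `K`. -/
def SubGaussian {Ω : Type*} [MeasurableSpace Ω] {m : ℕ} (μ : Measure Ω)
    (X : Ω → Fin m → ℝ) (K : ℝ) : Prop :=
  ∀ u : Fin m → ℝ,
    psiNorm 2 μ (fun ω => dot u (X ω)) ≤
      ENNReal.ofReal (K * Real.sqrt (∫ ω, dot u (X ω) ^ 2 ∂μ))

/-- `s`-sparse maximum eigenvalue of `E[X Xᵀ]`. -/
def sparseEig {Ω : Type*} [MeasurableSpace Ω] {m : ℕ} (μ : Measure Ω)
    (X : Ω → Fin m → ℝ) (s : ℕ) : ℝ :=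
  sSup {r : ℝ | ∃ u : Fin m → ℝ, l2 u = 1 ∧ l0 u ≤ s ∧ r = ∫ ω, dot (X ω) u ^ 2 ∂μ}

/-- complete-case population gram matrix `E[R X Xᵀ]`. -/
def gramCC {Ω : Type*} [MeasurableSpace Ω] {m : ℕ} (μ : Measure Ω)
    (R : Ω → ℝ) (X : Ω → Fin m → ℝ) : Matrix (Fin m) (Fin m) ℝ :=
  Matrix.of fun j k => ∫ ω, R ω * X ω j * X ω k ∂μ

/-- feasibility for the primal debiasing program. -/
def Feasible (n d : ℕ) (X : Fin n → Fin d → ℝ) (x : Fin d → ℝ)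
    (piHat : Fin n → ℝ) (γ : ℝ) (w : Fin n → ℝ) : Prop :=
  linf (fun j => x j - (1 / Real.sqrt n) * ∑ i, w i * piHat i * X i j) ≤ γ / n

/-- primal objective of the debiasing program. -/
def primalObj (n : ℕ) (piHat : Fin n → ℝ) (w : Fin n → ℝ) : ℝ := ∑ i, piHat i * w i ^ 2

/-- dual objective of the debiasing program. -/
def dualObj (n d : ℕ) (X : Fin n → Fin d → ℝ) (x : Fin d → ℝ)
    (piHat : Fin n → ℝ) (γ : ℝ) (ℓ : Fin d → ℝ) : ℝ :=
  (1 / (4 * n)) * ∑ i, piHat i * dot (X i) ℓ ^ 2 + dot x ℓ + (γ / n) * l1 ℓ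

/-!
Completing the square: for feasible `w` and any `ℓ`, the pairing of `ℓ` with the constraint
residual is controlled by `(γ/n)‖ℓ‖₁`, so that
`∑ π̂ᵢ (wᵢ + Xᵢᵀℓ / (2√n))² ≤ primalObj w + dualObj ℓ`.
The left side is nonnegative, which is weak duality. Under strong duality the right side
vanishes at a primal–dual optimal pair, so every summand vanishes, and `π̂ᵢ > 0` leaves
`ŵᵢ = -Xᵢᵀℓ̂ / (2√n)`.
-/

lemma abs_le_of_linf_le {m : ℕ} {v : Fin m → ℝ} {c : ℝ} (h : linf v ≤ c) (j : Fin m) :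
    |v j| ≤ c :=
  (le_ciSup (f := fun k => |v k|) (Set.finite_range _).bddAbove j).trans h

lemma abs_dot_le_linf_mul_l1 {m : ℕ} (u v : Fin m → ℝ) : |dot u v| ≤ linf u * l1 v := by
  calc |dot u v| ≤ ∑ j, |u j| * |v j| := by
        simpa only [dot, abs_mul] using abs_sum_le_sum_abs (fun j => u j * v j) univ
    _ ≤ ∑ j, linf u * |v j| :=
        sum_le_sum fun j _ => mul_le_mul_of_nonneg_right (abs_le_of_linf_le le_rfl j) (abs_nonneg _)
    _ = linf u * l1 v := by rw [← mul_sum, l1]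

lemma sum_mul_dot {ι : Type*} [Fintype ι] {m : ℕ} (a : ι → ℝ) (X : ι → Fin m → ℝ)
    (ℓ : Fin m → ℝ) : ∑ i, a i * dot (X i) ℓ = dot (fun j => ∑ i, a i * X i j) ℓ := by
  simp only [dot, mul_sum, sum_mul]
  rw [sum_comm]
  simp only [mul_assoc]

section Debiasing

variable {n d : ℕ} {X : Fin n → Fin d → ℝ} {x : Fin d → ℝ} {piHat : Fin n → ℝ} {γ : ℝ}

lemma Feasible.residual_pairing_le {w : Fin n → ℝ} (hw : Feasible n d X x piHat γ w)
    (ℓ : Fin d → ℝ) :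
    1 / Real.sqrt n * ∑ i, w i * piHat i * dot (X i) ℓ ≤ dot x ℓ + γ / n * l1 ℓ := by
  set r : Fin d → ℝ := fun j => x j - 1 / Real.sqrt n * ∑ i, w i * piHat i * X i j
  have hpairing : 1 / Real.sqrt n * ∑ i, w i * piHat i * dot (X i) ℓ = dot x ℓ - dot r ℓ := by
    simp only [mul_sum, ← mul_assoc]
    rw [sum_mul_dot, dot, dot, dot, ← sum_sub_distrib]
    refine sum_congr rfl fun j _ => ?_
    simp only [r, mul_sum, mul_assoc]
    ring
  have hr : |dot r ℓ| ≤ γ / n * l1 ℓ :=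
    (abs_dot_le_linf_mul_l1 r ℓ).trans
      (mul_le_mul_of_nonneg_right hw (sum_nonneg fun j _ => abs_nonneg (ℓ j)))
  rw [hpairing]
  linarith [neg_abs_le (dot r ℓ)]

lemma sum_sq_le_primalObj_add_dualObj {w : Fin n → ℝ} (hw : Feasible n d X x piHat γ w)
    (ℓ : Fin d → ℝ) :
    ∑ i, piHat i * (w i + 1 / (2 * Real.sqrt n) * dot (X i) ℓ) ^ 2 ≤
      primalObj n piHat w + dualObj n d X x piHat γ ℓ := by
  have hquarter : 1 / (4 * (n : ℝ)) = (1 / (2 * Real.sqrt n)) ^ 2 := by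
    rw [div_pow, mul_pow, Real.sq_sqrt (Nat.cast_nonneg n)]
    ring
  have hexpand : ∑ i, piHat i * (w i + 1 / (2 * Real.sqrt n) * dot (X i) ℓ) ^ 2 =
      primalObj n piHat w + 1 / Real.sqrt n * ∑ i, w i * piHat i * dot (X i) ℓ +
        1 / (4 * n) * ∑ i, piHat i * dot (X i) ℓ ^ 2 := by
    rw [primalObj, hquarter, mul_sum, mul_sum, ← sum_add_distrib, ← sum_add_distrib]
    exact sum_congr rfl fun i _ => by ring
  rw [hexpand, dualObj]
  linarith [hw.residual_pairing_le ℓ]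

lemma neg_dualObj_le_primalObj (hpi : ∀ i, 0 ≤ piHat i) {w : Fin n → ℝ}
    (hw : Feasible n d X x piHat γ w) (ℓ : Fin d → ℝ) :
    -dualObj n d X x piHat γ ℓ ≤ primalObj n piHat w := by
  have hgap := sum_sq_le_primalObj_add_dualObj hw ℓ
  have hsq := sum_nonneg fun i (_ : i ∈ univ) =>
    mul_nonneg (hpi i) (sq_nonneg (w i + 1 / (2 * Real.sqrt n) * dot (X i) ℓ))
  linarith

lemma eq_of_primalObj_add_dualObj_nonpos (hpi : ∀ i, 0 < piHat i) {w : Fin n → ℝ}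
    (hw : Feasible n d X x piHat γ w) {ℓ : Fin d → ℝ}
    (hgap : primalObj n piHat w + dualObj n d X x piHat γ ℓ ≤ 0) (i : Fin n) :
    w i = -(1 / (2 * Real.sqrt n)) * dot (X i) ℓ := by
  have hnonneg : ∀ k ∈ univ,
      0 ≤ piHat k * (w k + 1 / (2 * Real.sqrt n) * dot (X k) ℓ) ^ 2 :=
    fun k _ => mul_nonneg (hpi k).le (sq_nonneg _)
  have hsum : ∑ k, piHat k * (w k + 1 / (2 * Real.sqrt n) * dot (X k) ℓ) ^ 2 = 0 :=
    le_antisymm ((sum_sq_le_primalObj_add_dualObj hw ℓ).trans hgap) (sum_nonneg hnonneg)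
  have hi := (sum_eq_zero_iff_of_nonneg hnonneg).mp hsum i (mem_univ i)
  rw [mul_eq_zero, or_iff_right (hpi i).ne', sq_eq_zero_iff] at hi
  linarith

end Debiasing

theorem weak_duality_and_primal_dual_relation_general
    (n d : ℕ)
    (X : Fin n → Fin d → ℝ) (x : Fin d → ℝ) (piHat : Fin n → ℝ) (γ : ℝ)
    (hpi : ∀ i, 0 ≤ piHat i) :
    (∀ w : Fin n → ℝ, Feasible n d X x piHat γ w → ∀ ℓ : Fin d → ℝ,
        -(dualObj n d X x piHat γ ℓ) ≤ primalObj n piHat w) ∧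
    ((∀ i, 0 < piHat i) →
      ∀ (wHat : Fin n → ℝ) (ℓHat : Fin d → ℝ),
        sInf {v : ℝ | ∃ w, Feasible n d X x piHat γ w ∧ v = primalObj n piHat w}
          = -sInf (Set.range (dualObj n d X x piHat γ)) →
        Feasible n d X x piHat γ wHat →
        (∀ w, Feasible n d X x piHat γ w → primalObj n piHat wHat ≤ primalObj n piHat w) →
        (∀ ℓ, dualObj n d X x piHat γ ℓHat ≤ dualObj n d X x piHat γ ℓ) →
        ∀ i, wHat i = -(1 / (2 * Real.sqrt n)) * dot (X i) ℓHat) := by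
  refine ⟨fun w hw ℓ => neg_dualObj_le_primalObj hpi hw ℓ, ?_⟩
  intro hpos wHat ℓHat hstrong hwHat hprimal hdual
  have hprimal_inf :
      sInf {v : ℝ | ∃ w, Feasible n d X x piHat γ w ∧ v = primalObj n piHat w} =
        primalObj n piHat wHat :=
    IsLeast.csInf_eq ⟨⟨wHat, hwHat, rfl⟩, by rintro _ ⟨w, hw, rfl⟩; exact hprimal w hw⟩
  have hdual_inf : sInf (Set.range (dualObj n d X x piHat γ)) = dualObj n d X x piHat γ ℓHat :=
    IsLeast.csInf_eq ⟨⟨ℓHat, rfl⟩, by rintro _ ⟨ℓ, rfl⟩; exact hdual ℓ⟩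
  rw [hprimal_inf, hdual_inf] at hstrong
  exact eq_of_primalObj_add_dualObj_nonpos hpos hwHat (by linarith)

/-- weak duality and the primal–dual relation for the debiasing program. -/
theorem weak_duality_and_primal_dual_relation
    (n d : ℕ) (hn : 1 ≤ n) (hd : 1 ≤ d)
    (X : Fin n → Fin d → ℝ) (x : Fin d → ℝ) (piHat : Fin n → ℝ) (γ : ℝ)
    (hpi : ∀ i, 0 ≤ piHat i) (hγ : 0 < γ) :
    (∀ w : Fin n → ℝ, Feasible n d X x piHat γ w → ∀ ℓ : Fin d → ℝ,
        -(dualObj n d X x piHat γ ℓ) ≤ primalObj n piHat w) ∧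
    ((∀ i, 0 < piHat i) →
      ∀ (wHat : Fin n → ℝ) (ℓHat : Fin d → ℝ),
        sInf {v : ℝ | ∃ w, Feasible n d X x piHat γ w ∧ v = primalObj n piHat w}
          = -sInf (Set.range (dualObj n d X x piHat γ)) →
        Feasible n d X x piHat γ wHat →
        (∀ w, Feasible n d X x piHat γ w → primalObj n piHat wHat ≤ primalObj n piHat w) →
        (∀ ℓ, dualObj n d X x piHat γ ℓHat ≤ dualObj n d X x piHat γ ℓ) →
        ∀ i, wHat i = -(1 / (2 * Real.sqrt n)) * dot (X i) ℓHat) :=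
  weak_duality_and_primal_dual_relation_general n d X x piHat γ hpi
end
end

section
/- Sparse approximation of Mx under columnwise cone structure and a singular-value condition (Lemma D.1(b)): let d ≥ 1, M ∈ ℝ^{d×d}, J ⊆ {1,…,d} nonempty, and ϑ ≥ 0, and suppose every column M_{·,k} (k = 1,…,d) belongs to the cone C₁(J,ϑ). Let x ∈ ℝ^d be a nonzero vector with support S_x of cardinality s_x, and suppose the submatrix M_{J,S_x} has smallest singular value σ_min(M_{J,S_x}) > 0. Set K_{J,x} := max_{k∈S_x} √(s_x)·‖M_{J,k}‖₁/σ_min(M_{J,S_x}). Then Mx ∈ C₁(J, (1+ϑ)·K_{J,x}), and for every integer s ≥ 1 there exists ℓ̃ ∈ ℝ^d with at most s nonzero coordinates such that ‖ℓ̃ − Mx‖₂ ≤ ((1 + (1+ϑ)·K_{J,x})/2)·√(|J|/s)·‖Mx‖₂. -/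
/-!
Each column of `M` has its `Jᶜ`-part bounded in ℓ¹ by `ϑ` times its `J`-part, so
`‖(Mx)_{Jᶜ}‖₁ ≤ ϑ ∑ₖ |xₖ| ‖M_{J,k}‖₁ ≤ ϑ K σ_min ‖x‖₂` (Cauchy–Schwarz on the support of `x`),
and `σ_min ‖x‖₂ ≤ ‖(Mx)_J‖₂ ≤ ‖(Mx)_J‖₁` closes the cone condition. Inside the cone
`C₁(J, t)` one has `‖v‖₁ ≤ (1 + t) √|J| ‖v‖₂`, and keeping the `s` largest coordinates of `v`
approximates it within `‖v‖₁ / (2√s)` in ℓ² (Stechkin), which is the sparse approximation.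
-/

open MeasureTheory ProbabilityTheory Filter Finset Asymptotics
open scoped ENNReal NNReal Topology Classical

noncomputable section

lemma l1_nonneg {m : ℕ} (v : Fin m → ℝ) : 0 ≤ l1 v :=
  Finset.sum_nonneg fun _ _ => abs_nonneg _

lemma l2_nonneg {m : ℕ} (v : Fin m → ℝ) : 0 ≤ l2 v := Real.sqrt_nonneg _

lemma l1_restr {m : ℕ} (S : Finset (Fin m)) (v : Fin m → ℝ) :
    l1 (restr S v) = ∑ j ∈ S, |v j| := by
  rw [l1, ← Finset.sum_subset (Finset.subset_univ S)]
  · exact Finset.sum_congr rfl fun j hj => by simp [restr, hj]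
  · intro j _ hj; simp [restr, hj]

lemma l2_restr {m : ℕ} (S : Finset (Fin m)) (v : Fin m → ℝ) :
    l2 (restr S v) = Real.sqrt (∑ j ∈ S, v j ^ 2) := by
  rw [l2, ← Finset.sum_subset (Finset.subset_univ S)]
  · exact congrArg _ (Finset.sum_congr rfl fun j hj => by simp [restr, hj])
  · intro j _ hj; simp [restr, hj]

lemma restr_smul {m : ℕ} (S : Finset (Fin m)) (c : ℝ) (v : Fin m → ℝ) :
    restr S (c • v) = c • restr S v := by
  ext j; by_cases hj : j ∈ S <;> simp [restr, hj]

lemma l2_smul {m : ℕ} (c : ℝ) (v : Fin m → ℝ) : l2 (c • v) = |c| * l2 v := by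
  simp_rw [l2, Pi.smul_apply, smul_eq_mul, mul_pow, ← Finset.mul_sum,
    Real.sqrt_mul (sq_nonneg c), Real.sqrt_sq_eq_abs]

lemma l2_le_l1 {m : ℕ} (v : Fin m → ℝ) : l2 v ≤ l1 v := by
  have h : ∑ j, v j ^ 2 ≤ (∑ j, |v j|) ^ 2 := by
    simpa only [sq_abs] using
      Finset.sum_sq_le_sq_sum_of_nonneg (s := Finset.univ) fun j _ => abs_nonneg (v j)
  exact (Real.sqrt_le_left (l1_nonneg v)).2 h

lemma l1_eq_l1_restr_add_l1_restr_compl {m : ℕ} (S : Finset (Fin m)) (v : Fin m → ℝ) :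
    l1 v = l1 (restr S v) + l1 (restr Sᶜ v) := by
  rw [l1, l1_restr, l1_restr, Finset.sum_add_sum_compl]

lemma sum_abs_le_sqrt_card_mul_l2 {m : ℕ} (S : Finset (Fin m)) (v : Fin m → ℝ) :
    ∑ j ∈ S, |v j| ≤ Real.sqrt S.card * l2 v := by
  have h := Real.sum_mul_le_sqrt_mul_sqrt S (fun _ => (1 : ℝ)) (fun j => |v j|)
  simp only [one_mul, one_pow, Finset.sum_const, nsmul_eq_mul, mul_one, sq_abs] at h
  refine h.trans (mul_le_mul_of_nonneg_left (Real.sqrt_le_sqrt ?_) (Real.sqrt_nonneg _))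
  exact Finset.sum_le_sum_of_subset_of_nonneg (Finset.subset_univ S) fun j _ _ => sq_nonneg _

lemma l0_restr_le_card {m : ℕ} (S : Finset (Fin m)) (v : Fin m → ℝ) :
    l0 (restr S v) ≤ S.card :=
  Finset.card_le_card fun j hj => by
    by_contra h
    simp [restr, h] at hj

lemma exists_card_le_forall_mul_abs_le_sum {m : ℕ} (v : Fin m → ℝ) (s : ℕ) :
    ∃ T : Finset (Fin m), T.card ≤ s ∧ ∀ j ∉ T, s * |v j| ≤ ∑ i ∈ T, |v i| := by
  have hcard : min s m ≤ (Finset.univ : Finset (Fin m)).card := by simp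
  obtain ⟨T, hT, hTmax⟩ := (Finset.univ.powersetCard (min s m)).exists_max_image
    (fun T => ∑ i ∈ T, |v i|) (Finset.powersetCard_nonempty.2 hcard)
  have hTcard : T.card = min s m := (Finset.mem_powersetCard.1 hT).2
  refine ⟨T, hTcard.trans_le (min_le_left s m), fun j hj => ?_⟩
  have hTs : T.card = s := by
    have : T.card < m := by
      simpa using Finset.card_lt_card (Finset.ssubset_iff_subset_ne.2
        ⟨Finset.subset_univ T, fun h => hj (h ▸ Finset.mem_univ j)⟩)
    omega
  have hswap : ∀ i ∈ T, |v j| ≤ |v i| := by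
    intro i hi
    have hji : j ∉ T.erase i := fun h => hj (Finset.mem_of_mem_erase h)
    have hmem : insert j (T.erase i) ∈ Finset.univ.powersetCard (min s m) := by
      rw [Finset.mem_powersetCard, Finset.card_insert_of_notMem hji, Finset.card_erase_of_mem hi]
      exact ⟨Finset.subset_univ _, by have := Finset.card_pos.2 ⟨i, hi⟩; omega⟩
    have h := hTmax _ hmem
    rw [Finset.sum_insert hji, ← Finset.add_sum_erase T _ hi] at h
    linarith
  calc (s : ℝ) * |v j| = ∑ _i ∈ T, |v j| := by simp [hTs]
    _ ≤ ∑ i ∈ T, |v i| := Finset.sum_le_sum hswap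

lemma sum_compl_sq_le_l1_sq_div {m : ℕ} (v : Fin m → ℝ) {s : ℕ} (hs : 1 ≤ s)
    {T : Finset (Fin m)} (hT : ∀ j ∉ T, s * |v j| ≤ ∑ i ∈ T, |v i|) :
    ∑ j ∈ Tᶜ, v j ^ 2 ≤ l1 v ^ 2 / (4 * s) := by
  have hs0 : (0 : ℝ) < s := by exact_mod_cast hs
  set A := ∑ i ∈ T, |v i|
  set B := ∑ i ∈ Tᶜ, |v i|
  have hAB : l1 v = A + B := (Finset.sum_add_sum_compl T _).symm
  have hsq : ∀ j ∈ Tᶜ, v j ^ 2 ≤ A / s * |v j| := fun j hj => by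
    rw [← sq_abs, sq]
    gcongr
    rw [le_div_iff₀ hs0, mul_comm]
    exact hT j (Finset.mem_compl.1 hj)
  calc ∑ j ∈ Tᶜ, v j ^ 2 ≤ ∑ j ∈ Tᶜ, A / s * |v j| := Finset.sum_le_sum hsq
    _ = A * B / s := by rw [← Finset.mul_sum]; ring
    _ ≤ (A + B) ^ 2 / 4 / s := by gcongr; nlinarith [sq_nonneg (A - B)]
    _ = l1 v ^ 2 / (4 * s) := by rw [hAB]; ring

/-- Stechkin's bound for best `s`-term approximation. -/
lemma exists_l0_le_l2_sub_le {m : ℕ} (v : Fin m → ℝ) {s : ℕ} (hs : 1 ≤ s) :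
    ∃ ℓ : Fin m → ℝ, l0 ℓ ≤ s ∧ l2 (ℓ - v) ≤ l1 v / (2 * Real.sqrt s) := by
  obtain ⟨T, hTs, hT⟩ := exists_card_le_forall_mul_abs_le_sum v s
  refine ⟨restr T v, (l0_restr_le_card T v).trans hTs, ?_⟩
  have herr : restr T v - v = restr Tᶜ (-v) := by
    ext j; by_cases hj : j ∈ T <;> simp [restr, hj]
  have hs0 : (0 : ℝ) ≤ s := Nat.cast_nonneg s
  rw [herr, l2_restr, show l1 v / (2 * Real.sqrt s) = Real.sqrt (l1 v ^ 2 / (4 * s)) by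
    rw [Real.sqrt_div' _ (by positivity), Real.sqrt_mul' _ hs0, Real.sqrt_sq (l1_nonneg v),
      show (4 : ℝ) = 2 ^ 2 by norm_num, Real.sqrt_sq zero_le_two]]
  exact Real.sqrt_le_sqrt (by simpa using sum_compl_sq_le_l1_sq_div v hs hT)

lemma l1_le_of_mem_cone1 {m : ℕ} {J : Finset (Fin m)} {t : ℝ} (ht : 0 ≤ t) {v : Fin m → ℝ}
    (hv : v ∈ cone1 J t) : l1 v ≤ (1 + t) * (Real.sqrt J.card * l2 v) := by
  have hJ : l1 (restr J v) ≤ Real.sqrt J.card * l2 v :=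
    (l1_restr J v).trans_le (sum_abs_le_sqrt_card_mul_l2 J v)
  calc l1 v = l1 (restr J v) + l1 (restr Jᶜ v) := l1_eq_l1_restr_add_l1_restr_compl J v
    _ ≤ (1 + t) * l1 (restr J v) := by linarith [hv.out]
    _ ≤ (1 + t) * (Real.sqrt J.card * l2 v) := by gcongr

lemma exists_sparse_approx_of_mem_cone1 {m : ℕ} {J : Finset (Fin m)} {t : ℝ} (ht : 0 ≤ t)
    {v : Fin m → ℝ} (hv : v ∈ cone1 J t) {s : ℕ} (hs : 1 ≤ s) :
    ∃ ℓ : Fin m → ℝ, l0 ℓ ≤ s ∧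
      l2 (ℓ - v) ≤ (1 + t) / 2 * Real.sqrt (J.card / s) * l2 v := by
  obtain ⟨ℓ, hℓ0, hℓ⟩ := exists_l0_le_l2_sub_le v hs
  have hs0 : (0 : ℝ) < Real.sqrt s := Real.sqrt_pos.2 (by exact_mod_cast hs)
  refine ⟨ℓ, hℓ0, hℓ.trans ?_⟩
  calc l1 v / (2 * Real.sqrt s) ≤ (1 + t) * (Real.sqrt J.card * l2 v) / (2 * Real.sqrt s) := by
        gcongr; exact l1_le_of_mem_cone1 ht hv
    _ = (1 + t) / 2 * Real.sqrt (J.card / s) * l2 v := by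
        rw [Real.sqrt_div' _ (Nat.cast_nonneg s)]; field_simp

lemma le_sSup_setOf_exists_mem_eq {ι : Type*} {S : Finset ι} (f : ι → ℝ) {k : ι} (hk : k ∈ S) :
    f k ≤ sSup {c : ℝ | ∃ k ∈ S, c = f k} := by
  have hfin : {c : ℝ | ∃ k ∈ S, c = f k}.Finite :=
    (S.finite_toSet.image f).subset fun c ⟨k, hk, hc⟩ => ⟨k, hk, hc.symm⟩
  exact le_csSup hfin.bddAbove ⟨k, hk, rfl⟩

lemma sInf_mul_l2_le_l2_restr_mulVec {m : ℕ} (M : Matrix (Fin m) (Fin m) ℝ)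
    (J S : Finset (Fin m)) {x : Fin m → ℝ} (hx : ∀ j ∉ S, x j = 0) :
    sInf {c : ℝ | ∃ u : Fin m → ℝ, (∀ j ∉ S, u j = 0) ∧ l2 u = 1 ∧
        c = l2 (restr J (M.mulVec u))} * l2 x ≤ l2 (restr J (M.mulVec x)) := by
  rcases (l2_nonneg x).eq_or_lt with hx0 | hx0
  · rw [← hx0, mul_zero]; exact l2_nonneg _
  have hu : l2 ((l2 x)⁻¹ • x) = 1 := by
    rw [l2_smul, abs_of_pos (inv_pos.2 hx0), inv_mul_cancel₀ hx0.ne']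
  have hmem : (l2 x)⁻¹ * l2 (restr J (M.mulVec x)) ∈ {c : ℝ | ∃ u : Fin m → ℝ,
      (∀ j ∉ S, u j = 0) ∧ l2 u = 1 ∧ c = l2 (restr J (M.mulVec u))} := by
    refine ⟨(l2 x)⁻¹ • x, fun j hj => by simp [hx j hj], hu, ?_⟩
    rw [Matrix.mulVec_smul, restr_smul, l2_smul, abs_of_pos (inv_pos.2 hx0)]
  have hbdd : BddBelow {c : ℝ | ∃ u : Fin m → ℝ,
      (∀ j ∉ S, u j = 0) ∧ l2 u = 1 ∧ c = l2 (restr J (M.mulVec u))} :=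
    ⟨0, fun _ ⟨_, _, _, hc⟩ => hc ▸ l2_nonneg _⟩
  have hle := csInf_le hbdd hmem
  rwa [← le_div_iff₀ hx0, div_eq_inv_mul]

lemma l1_restr_compl_mulVec_le {m : ℕ} {M : Matrix (Fin m) (Fin m) ℝ} {J : Finset (Fin m)}
    {ϑ : ℝ} (hcols : ∀ k, (fun j => M j k) ∈ cone1 J ϑ) (x : Fin m → ℝ) :
    l1 (restr Jᶜ (M.mulVec x)) ≤ ∑ k, |x k| * (ϑ * ∑ j ∈ J, |M j k|) := by
  have hcol : ∀ k, ∑ j ∈ Jᶜ, |M j k| ≤ ϑ * ∑ j ∈ J, |M j k| := fun k => by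
    simpa only [cone1, Set.mem_ofPred_eq, l1_restr] using hcols k
  calc l1 (restr Jᶜ (M.mulVec x)) = ∑ j ∈ Jᶜ, |∑ k, M j k * x k| := l1_restr _ _
    _ ≤ ∑ j ∈ Jᶜ, ∑ k, |x k| * |M j k| := by
        gcongr with j
        exact (Finset.abs_sum_le_sum_abs _ _).trans_eq (by simp [abs_mul, mul_comm])
    _ = ∑ k, |x k| * ∑ j ∈ Jᶜ, |M j k| := by rw [Finset.sum_comm]; simp [Finset.mul_sum]
    _ ≤ ∑ k, |x k| * (ϑ * ∑ j ∈ J, |M j k|) := by gcongr with k; exact hcol k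

theorem sparse_approx_singular_value_general
    (d : ℕ) (M : Matrix (Fin d) (Fin d) ℝ)
    (J : Finset (Fin d)) (ϑ : ℝ) (hϑ : 0 ≤ ϑ)
    (hcols : ∀ k, (fun j => M j k) ∈ cone1 J ϑ)
    (x : Fin d → ℝ) (hx : x ≠ 0)
    (Sx : Finset (Fin d)) (hSx : Sx = Finset.univ.filter fun j => x j ≠ 0)
    (sx : ℕ) (hsx : sx = Sx.card)
    (σmin : ℝ)
    (hσ : σmin = sInf {c : ℝ | ∃ u : Fin d → ℝ, (∀ j ∉ Sx, u j = 0) ∧ l2 u = 1 ∧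
        c = l2 (restr J (M.mulVec u))})
    (hσpos : 0 < σmin)
    (KJx : ℝ)
    (hK : KJx = sSup {c : ℝ | ∃ k ∈ Sx,
        c = Real.sqrt (sx : ℝ) * (∑ j ∈ J, |M j k|) / σmin}) :
    M.mulVec x ∈ cone1 J ((1 + ϑ) * KJx) ∧
    ∀ s : ℕ, 1 ≤ s → ∃ ℓt : Fin d → ℝ, l0 ℓt ≤ s ∧
      l2 (fun j => ℓt j - M.mulVec x j)
        ≤ ((1 + (1 + ϑ) * KJx) / 2) * Real.sqrt ((J.card : ℝ) / (s : ℝ)) * l2 (M.mulVec x) := by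
  set v := M.mulVec x
  have hsupp : ∀ k ∉ Sx, x k = 0 := by simp [hSx]
  obtain ⟨k₀, hk₀⟩ : ∃ k, x k ≠ 0 := Function.ne_iff.1 hx
  have hk₀S : k₀ ∈ Sx := by simp [hSx, hk₀]
  have hsx0 : 0 < Real.sqrt sx := Real.sqrt_pos.2 (by simpa [hsx] using ⟨k₀, hk₀S⟩)
  have hKk : ∀ k ∈ Sx, Real.sqrt sx * (∑ j ∈ J, |M j k|) / σmin ≤ KJx := fun k hk =>
    hK ▸ le_sSup_setOf_exists_mem_eq (fun k => Real.sqrt sx * (∑ j ∈ J, |M j k|) / σmin) hk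
  have hK0 : 0 ≤ KJx := le_trans (by positivity) (hKk k₀ hk₀S)
  have hcol : ∀ k ∈ Sx, ∑ j ∈ J, |M j k| ≤ KJx * σmin / Real.sqrt sx := fun k hk => by
    rw [le_div_iff₀ hsx0, ← div_le_iff₀ hσpos, mul_comm]
    exact hKk k hk
  have hσx : σmin * l2 x ≤ l2 (restr J v) := hσ ▸ sInf_mul_l2_le_l2_restr_mulVec M J Sx hsupp
  have hcone : l1 (restr Jᶜ v) ≤ ϑ * KJx * l1 (restr J v) :=
    calc l1 (restr Jᶜ v) ≤ ∑ k, |x k| * (ϑ * ∑ j ∈ J, |M j k|) := l1_restr_compl_mulVec_le hcols x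
      _ = ∑ k ∈ Sx, |x k| * (ϑ * ∑ j ∈ J, |M j k|) :=
          (Finset.sum_subset (Finset.subset_univ Sx) fun k _ hk => by simp [hsupp k hk]).symm
      _ ≤ ∑ k ∈ Sx, |x k| * (ϑ * (KJx * σmin / Real.sqrt sx)) := by
          gcongr with k hk; exact hcol k hk
      _ ≤ Real.sqrt sx * l2 x * (ϑ * (KJx * σmin / Real.sqrt sx)) := by
          rw [← Finset.sum_mul, hsx]; gcongr; exact sum_abs_le_sqrt_card_mul_l2 Sx x
      _ = ϑ * KJx * (σmin * l2 x) := by field_simp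
      _ ≤ ϑ * KJx * l1 (restr J v) := by gcongr; exact hσx.trans (l2_le_l1 _)
  have hmem : v ∈ cone1 J ((1 + ϑ) * KJx) := by
    refine hcone.trans ?_
    gcongr
    · exact l1_nonneg _
    · linarith
  exact ⟨hmem, fun s hs => exists_sparse_approx_of_mem_cone1 (by positivity) hmem hs⟩

/-- sparse approximation of `Mx` under columnwise cone structure and a
singular-value condition. -/
theorem sparse_approx_singular_value
    (d : ℕ) (hd : 1 ≤ d) (M : Matrix (Fin d) (Fin d) ℝ)
    (J : Finset (Fin d)) (hJ : J.Nonempty) (ϑ : ℝ) (hϑ : 0 ≤ ϑ)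
    (hcols : ∀ k, (fun j => M j k) ∈ cone1 J ϑ)
    (x : Fin d → ℝ) (hx : x ≠ 0)
    (Sx : Finset (Fin d)) (hSx : Sx = Finset.univ.filter fun j => x j ≠ 0)
    (sx : ℕ) (hsx : sx = Sx.card)
    (σmin : ℝ)
    (hσ : σmin = sInf {c : ℝ | ∃ u : Fin d → ℝ, (∀ j ∉ Sx, u j = 0) ∧ l2 u = 1 ∧
        c = l2 (restr J (M.mulVec u))})
    (hσpos : 0 < σmin)
    (KJx : ℝ)
    (hK : KJx = sSup {c : ℝ | ∃ k ∈ Sx,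
        c = Real.sqrt (sx : ℝ) * (∑ j ∈ J, |M j k|) / σmin}) :
    M.mulVec x ∈ cone1 J ((1 + ϑ) * KJx) ∧
    ∀ s : ℕ, 1 ≤ s → ∃ ℓt : Fin d → ℝ, l0 ℓt ≤ s ∧
      l2 (fun j => ℓt j - M.mulVec x j)
        ≤ ((1 + (1 + ϑ) * KJx) / 2) * Real.sqrt ((J.card : ℝ) / (s : ℝ)) * l2 (M.mulVec x) :=
  sparse_approx_singular_value_general d M J ϑ hϑ hcols x hx Sx hSx sx hsx σmin hσ hσpos KJx hK
end
end

section
/- Expectation bound from a mixed sub-Gaussian/sub-exponential tail (Lemma E.5): let a ≥ √e and b, K > 0, and let Z be a random variable on a probability space with Z > 0 almost surely such that P(Z > t) ≤ a·exp(−b·min{t²/K², t/K}) for all t > 0. Then E[Z] ≤ 2K·√(log(a)/b) + K·log(a)/b + K/b. -/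
open MeasureTheory ProbabilityTheory Filter Finset Asymptotics
open scoped ENNReal NNReal Topology Classical

noncomputable section

/-!
By the layer-cake formula `E Z = ∫₀^∞ P(Z > t) dt`, and since a probability is at most `1`,
`P(Z > t) ≤ min(1, a e^{-b t²/K²}) + min(1, a e^{-b t/K})`. Each summand is integrated by cutting
at the point `T` where its exponential bound crosses `1`: the part below `T` contributes `T`, the
part above is an exponential tail (for the Gaussian term after replacing `t²` by its tangent line
at `T`).
-/

open Set Real

lemma min_add_le_min_add_min {α : Type*} [AddCommMonoid α] [LinearOrder α] [CanonicallyOrderedAdd α]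
    [IsOrderedAddMonoid α] (c x y : α) : min c (x + y) ≤ min c x + min c y := by
  rcases le_total c x with hx | hx
  · exact (min_le_left _ _).trans (by simp [hx])
  rcases le_total c y with hy | hy
  · exact (min_le_left _ _).trans (by simp [hy])
  · simp [hx, hy]

lemma exp_sub_mul_min_le_add (L b u v : ℝ) :
    exp (L - b * min u v) ≤ exp (L - b * u) + exp (L - b * v) := by
  rcases min_cases u v with ⟨h, _⟩ | ⟨h, _⟩ <;> rw [h] <;>
    linarith [exp_pos (L - b * u), exp_pos (L - b * v)]

lemma lintegral_Ioi_exp_neg_mul_sub {r : ℝ} (hr : 0 < r) (T : ℝ) :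
    ∫⁻ t in Ioi T, ENNReal.ofReal (exp (-(r * (t - T)))) = ENNReal.ofReal (1 / r) := by
  have hsplit : (fun t => exp (-(r * (t - T)))) = fun t => exp (r * T) * exp (-r * t) := by
    ext t; rw [← Real.exp_add]; ring_nf
  have hint : IntegrableOn (fun t => exp (-(r * (t - T)))) (Ioi T) := by
    rw [hsplit]; exact (integrableOn_exp_mul_Ioi (neg_lt_zero.2 hr) T).const_mul _
  rw [← ofReal_integral_eq_lintegral_ofReal hint (ae_of_all _ fun t => (exp_pos _).le), hsplit,
    integral_const_mul, integral_exp_mul_Ioi (neg_lt_zero.2 hr)]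
  congr 1
  rw [neg_mul, Real.exp_neg]
  field_simp [(exp_pos (r * T)).ne']

lemma lintegral_Ioi_min_one_le {f : ℝ → ℝ≥0∞} {T r : ℝ} (hT : 0 ≤ T) (hr : 0 < r)
    (hf : ∀ t, T < t → f t ≤ ENNReal.ofReal (exp (-(r * (t - T))))) :
    ∫⁻ t in Ioi 0, min 1 (f t) ≤ ENNReal.ofReal (T + 1 / r) := by
  rw [← Ioc_union_Ioi_eq_Ioi hT, ENNReal.ofReal_add hT (by positivity)]
  refine (lintegral_union_le _ _ _).trans (add_le_add ?_ ?_)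
  · calc ∫⁻ t in Ioc 0 T, min 1 (f t) ≤ ∫⁻ _ in Ioc 0 T, 1 :=
          lintegral_mono fun t => min_le_left _ _
      _ = ENNReal.ofReal T := by simp
  · calc ∫⁻ t in Ioi T, min 1 (f t)
        ≤ ∫⁻ t in Ioi T, ENNReal.ofReal (exp (-(r * (t - T)))) :=
          setLIntegral_mono' measurableSet_Ioi fun t ht => (min_le_right _ _).trans (hf t ht)
      _ = ENNReal.ofReal (1 / r) := lintegral_Ioi_exp_neg_mul_sub hr T

lemma lintegral_Ioi_min_one_exp_sub_mul_le {L r : ℝ} (hL : 0 ≤ L) (hr : 0 < r) :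
    ∫⁻ t in Ioi 0, min 1 (ENNReal.ofReal (exp (L - r * t))) ≤ ENNReal.ofReal (L / r + 1 / r) :=
  lintegral_Ioi_min_one_le (by positivity) hr fun t _ => by
    rw [show L - r * t = -(r * (t - L / r)) by field_simp; ring]

/-- Beyond `T = √(L / c)`, where `exp (L - c t²) = 1`, the tangent line of `c t²` at `T` bounds the
Gaussian tail by an exponential one of rate `2 c T`; `L ≥ 1 / 2` makes `1 / (2 c T) ≤ T`. -/
lemma lintegral_Ioi_min_one_exp_sub_mul_sq_le {L c : ℝ} (hL : 1 / 2 ≤ L) (hc : 0 < c) :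
    ∫⁻ t in Ioi 0, min 1 (ENNReal.ofReal (exp (L - c * t ^ 2))) ≤
      ENNReal.ofReal (2 * √(L / c)) := by
  set T := √(L / c)
  have hT : 0 < T := Real.sqrt_pos.2 (by positivity)
  have hcT : c * T ^ 2 = L := by
    rw [Real.sq_sqrt (by positivity)]; field_simp
  have htangent : ∀ t, T < t →
      ENNReal.ofReal (exp (L - c * t ^ 2)) ≤ ENNReal.ofReal (exp (-(2 * c * T * (t - T)))) := by
    intro t _
    gcongr
    nlinarith [mul_nonneg hc.le (sq_nonneg (t - T))]
  refine (lintegral_Ioi_min_one_le hT.le (by positivity) htangent).trans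
    (ENNReal.ofReal_le_ofReal ?_)
  have : 1 / (2 * c * T) ≤ T := by
    rw [div_le_iff₀ (by positivity)]; nlinarith
  linarith

lemma integral_le_of_lintegral_min_one_tail_le {Ω : Type*} [MeasurableSpace Ω] {μ : Measure Ω}
    [IsProbabilityMeasure μ] {Z : Ω → ℝ} (hZ : 0 ≤ᵐ[μ] Z) (hZm : AEMeasurable Z μ)
    {f : ℝ → ℝ≥0∞} (hf : ∀ t, 0 < t → μ {ω | t < Z ω} ≤ f t) {C : ℝ} (hC0 : 0 ≤ C)
    (hC : ∫⁻ t in Ioi 0, min 1 (f t) ≤ ENNReal.ofReal C) :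
    ∫ ω, Z ω ∂μ ≤ C := by
  rw [integral_eq_lintegral_of_nonneg_ae hZ hZm.aestronglyMeasurable,
    lintegral_eq_lintegral_meas_lt μ hZ hZm, ← ENNReal.toReal_ofReal hC0]
  refine ENNReal.toReal_mono ENNReal.ofReal_ne_top (le_trans ?_ hC)
  exact setLIntegral_mono' measurableSet_Ioi fun t ht => le_min prob_le_one (hf t ht)

lemma lintegral_Ioi_min_one_mixed_tail_le {L b K : ℝ} (hL : 1 / 2 ≤ L) (hb : 0 < b) (hK : 0 < K) :
    ∫⁻ t in Ioi 0, min 1 (ENNReal.ofReal (exp (L - b / K ^ 2 * t ^ 2)) +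
      ENNReal.ofReal (exp (L - b / K * t))) ≤
      ENNReal.ofReal (2 * K * √(L / b) + K * L / b + K / b) := by
  calc ∫⁻ t in Ioi 0, min 1 (ENNReal.ofReal (exp (L - b / K ^ 2 * t ^ 2)) +
        ENNReal.ofReal (exp (L - b / K * t)))
      ≤ ∫⁻ t in Ioi 0, (min 1 (ENNReal.ofReal (exp (L - b / K ^ 2 * t ^ 2))) +
        min 1 (ENNReal.ofReal (exp (L - b / K * t)))) :=
        lintegral_mono fun t => min_add_le_min_add_min _ _ _
    _ = (∫⁻ t in Ioi 0, min 1 (ENNReal.ofReal (exp (L - b / K ^ 2 * t ^ 2)))) +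
        ∫⁻ t in Ioi 0, min 1 (ENNReal.ofReal (exp (L - b / K * t))) :=
        lintegral_add_left (by fun_prop) _
    _ ≤ ENNReal.ofReal (2 * √(L / (b / K ^ 2))) + ENNReal.ofReal (L / (b / K) + 1 / (b / K)) :=
        add_le_add (lintegral_Ioi_min_one_exp_sub_mul_sq_le hL (by positivity))
          (lintegral_Ioi_min_one_exp_sub_mul_le (by linarith) (by positivity))
    _ = ENNReal.ofReal (2 * K * √(L / b) + K * L / b + K / b) := by
        have hsqrt : √(L / (b / K ^ 2)) = K * √(L / b) := by
          rw [show L / (b / K ^ 2) = K ^ 2 * (L / b) by field_simp, Real.sqrt_mul (sq_nonneg K),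
            Real.sqrt_sq hK.le]
        rw [← ENNReal.ofReal_add (by positivity) (by positivity), hsqrt]
        congr 1
        field_simp
        ring

/-- expectation bound from a mixed sub-Gaussian/sub-exponential tail. -/
theorem expectation_bound_from_mixed_tail
    {Ω : Type*} [MeasurableSpace Ω] (μ : Measure Ω) [IsProbabilityMeasure μ]
    (a b K : ℝ) (ha : Real.sqrt (Real.exp 1) ≤ a) (hb : 0 < b) (hK : 0 < K)
    (Z : Ω → ℝ) (hZmeas : Measurable Z) (hZpos : ∀ᵐ ω ∂μ, 0 < Z ω)
    (htail : ∀ t : ℝ, 0 < t →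
      μ {ω | t < Z ω} ≤ ENNReal.ofReal (a * Real.exp (-b * min (t ^ 2 / K ^ 2) (t / K)))) :
    ∫ ω, Z ω ∂μ ≤ 2 * K * Real.sqrt (Real.log a / b) + K * Real.log a / b + K / b := by
  have ha0 : 0 < a := (Real.sqrt_pos.2 (exp_pos 1)).trans_le ha
  set L := Real.log a
  have hL : 1 / 2 ≤ L := by
    calc 1 / 2 = Real.log √(exp 1) := by rw [Real.log_sqrt (exp_pos 1).le, Real.log_exp]
      _ ≤ L := Real.log_le_log (Real.sqrt_pos.2 (exp_pos 1)) ha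
  have hmixed : ∀ t, 0 < t → μ {ω | t < Z ω} ≤
      ENNReal.ofReal (exp (L - b / K ^ 2 * t ^ 2)) + ENNReal.ofReal (exp (L - b / K * t)) := by
    intro t ht
    refine (htail t ht).trans ?_
    rw [← ENNReal.ofReal_add (exp_pos _).le (exp_pos _).le, neg_mul, Real.exp_neg,
      ← div_eq_mul_inv, ← Real.exp_log ha0, ← Real.exp_sub]
    gcongr
    convert exp_sub_mul_min_le_add L b (t ^ 2 / K ^ 2) (t / K) using 3 <;> ring
  exact integral_le_of_lintegral_min_one_tail_le (hZpos.mono fun _ h => h.le)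
    hZmeas.aemeasurable hmixed (by positivity) (lintegral_Ioi_min_one_mixed_tail_le hL hb hK)
end
end

section
/- Orlicz norm of products of random variables (Lemma E.11): let α ∈ (0,2], let N ≥ 1 be an integer, and let X₁,…,X_N be real random variables on a common probability space with ‖Xᵢ‖_{ψ_α} < ∞ for each i. Then ‖∏ᵢ₌₁^N Xᵢ‖_{ψ_{α/N}} ≤ ∏ᵢ₌₁^N ‖Xᵢ‖_{ψ_α}. -/
open MeasureTheory ProbabilityTheory Filter Finset Asymptotics
open scoped ENNReal NNReal Topology Classical

noncomputable section

/-!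
If `tᵢ` is admissible for `Xᵢ`, weighted AM-GM with weights `1/N` bounds
`exp ((∏ |Xᵢ|/tᵢ) ^ (α/N))` by `∏ exp ((|Xᵢ|/tᵢ) ^ α) ^ (1/N)`, and Hölder's inequality with
`N` exponents equal to `N` bounds the integral of the latter by `∏ 2 ^ (1/N) = 2`. So `∏ tᵢ` is
admissible for `∏ Xᵢ`, and letting each `tᵢ` decrease to `‖Xᵢ‖_{ψ_α}` gives the claim.
-/

namespace Real

theorem prod_rpow_div_card_le_sum {ι : Type*} [Fintype ι] [Nonempty ι] (a : ℝ) {y : ι → ℝ}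
    (hy : ∀ i, 0 ≤ y i) :
    (∏ i, y i) ^ (a / Fintype.card ι) ≤ ∑ i, (Fintype.card ι : ℝ)⁻¹ * y i ^ a := by
  have hcard : (Fintype.card ι : ℝ) ≠ 0 := by positivity
  calc (∏ i, y i) ^ (a / Fintype.card ι)
      = ∏ i, (y i ^ a) ^ (Fintype.card ι : ℝ)⁻¹ := by
        rw [← finsetProd_rpow _ _ fun i _ => hy i]
        exact Finset.prod_congr rfl fun i _ => by rw [← rpow_mul (hy i), div_eq_mul_inv]
    _ ≤ ∑ i, (Fintype.card ι : ℝ)⁻¹ * y i ^ a :=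
        geom_mean_le_arith_mean_weighted _ _ _ (fun _ _ => by positivity)
          (by simp [hcard]) fun i _ => rpow_nonneg (hy i) a

end Real

theorem ENNReal.ofReal_exp_prod_rpow_le {ι : Type*} [Fintype ι] [Nonempty ι] (a : ℝ)
    {y : ι → ℝ} (hy : ∀ i, 0 ≤ y i) :
    ENNReal.ofReal (Real.exp ((∏ i, y i) ^ (a / Fintype.card ι))) ≤
      ∏ i, ENNReal.ofReal (Real.exp (y i ^ a)) ^ (Fintype.card ι : ℝ)⁻¹ := by
  calc ENNReal.ofReal (Real.exp ((∏ i, y i) ^ (a / Fintype.card ι)))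
      ≤ ENNReal.ofReal (Real.exp (∑ i, (Fintype.card ι : ℝ)⁻¹ * y i ^ a)) := by
        gcongr
        exact Real.prod_rpow_div_card_le_sum a hy
    _ = ∏ i, ENNReal.ofReal (Real.exp (y i ^ a)) ^ (Fintype.card ι : ℝ)⁻¹ := by
        rw [Real.exp_sum, ENNReal.ofReal_prod_of_nonneg fun i _ => (Real.exp_pos _).le]
        refine Finset.prod_congr rfl fun i _ => ?_
        rw [ENNReal.ofReal_rpow_of_nonneg (Real.exp_pos _).le (by positivity), ← Real.exp_mul,
          mul_comm]

theorem ENNReal.le_prod_sInf {ι : Type*} [Fintype ι] {S : ι → Set ℝ≥0∞} {a : ℝ≥0∞}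
    (hS : ∀ i, sInf (S i) ≠ ∞) (h : ∀ t : ι → ℝ≥0∞, (∀ i, t i ∈ S i) → a ≤ ∏ i, t i) :
    a ≤ ∏ i, sInf (S i) := by
  have hε : ∀ ε > (0 : ℝ≥0∞), a ≤ ∏ i, (sInf (S i) + ε) := by
    intro ε hε
    have hlt : ∀ i, ∃ t ∈ S i, t < sInf (S i) + ε := fun i =>
      sInf_lt_iff.mp (ENNReal.lt_add_right (hS i) hε.ne')
    choose t ht htε using hlt
    exact (h t ht).trans (Finset.prod_le_prod' fun i _ => (htε i).le)
  have hlim : Tendsto (fun ε => ∏ i, (sInf (S i) + ε)) (𝓝[>] 0) (𝓝 (∏ i, sInf (S i))) := by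
    refine (ENNReal.tendsto_finsetProd_of_ne_top _ (fun i _ => ?_) fun i _ => hS i).mono_left
      nhdsWithin_le_nhds
    simpa using tendsto_const_nhds.add (tendsto_id (x := 𝓝 (0 : ℝ≥0∞)))
  exact ge_of_tendsto hlim (eventually_nhdsWithin_of_forall hε)

section PsiNorm

variable {Ω ι : Type*} [MeasurableSpace Ω] {μ : Measure Ω}

/-- `psiNorm a μ Z` is by definition `sInf (psiAdmissible a μ Z)`. -/
def psiAdmissible (a : ℝ) (μ : Measure Ω) (Z : Ω → ℝ) : Set ℝ≥0∞ :=
  {t | 0 < t ∧ t ≠ ∞ ∧ ∫⁻ ω, ENNReal.ofReal (Real.exp (|Z ω| ^ a / t.toReal ^ a)) ∂μ ≤ 2}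

variable [Fintype ι] [Nonempty ι]

theorem prod_mem_psiAdmissible {a : ℝ} {X : ι → Ω → ℝ} (hX : ∀ i, AEMeasurable (X i) μ)
    {t : ι → ℝ≥0∞} (ht : ∀ i, t i ∈ psiAdmissible a μ (X i)) :
    ∏ i, t i ∈ psiAdmissible (a / Fintype.card ι) μ (fun ω => ∏ i, X i ω) := by
  have ht0 : ∀ i, 0 < t i := fun i => (ht i).1
  have httop : ∀ i, t i ≠ ∞ := fun i => (ht i).2.1
  set s := fun i => (t i).toReal
  have hs : ∀ i, 0 < s i := fun i => ENNReal.toReal_pos (ht0 i).ne' (httop i)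
  have hy : ∀ i ω, 0 ≤ |X i ω| / s i := fun i ω => div_nonneg (abs_nonneg _) (hs i).le
  have hrescale : ∀ (b : ℝ) (ω : Ω) (i : ι), |X i ω| ^ b / s i ^ b = (|X i ω| / s i) ^ b :=
    fun b ω i => (Real.div_rpow (abs_nonneg _) (hs i).le b).symm
  let n : ℝ := Fintype.card ι
  refine ⟨CanonicallyOrderedAdd.prod_pos.mpr fun i _ => ht0 i,
    ENNReal.prod_ne_top fun i _ => httop i, ?_⟩
  calc ∫⁻ ω, ENNReal.ofReal (Real.exp (|∏ i, X i ω| ^ (a / n) / (∏ i, t i).toReal ^ (a / n))) ∂μ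
      = ∫⁻ ω, ENNReal.ofReal (Real.exp ((∏ i, |X i ω| / s i) ^ (a / n))) ∂μ := by
        refine lintegral_congr fun ω => ?_
        rw [Finset.prod_div_distrib, Real.div_rpow (by positivity) (by positivity),
          Finset.abs_prod, ENNReal.toReal_prod]
    _ ≤ ∫⁻ ω, ∏ i, ENNReal.ofReal (Real.exp ((|X i ω| / s i) ^ a)) ^ n⁻¹ ∂μ :=
        lintegral_mono fun ω => ENNReal.ofReal_exp_prod_rpow_le a (hy · ω)
    _ ≤ ∏ i, (∫⁻ ω, ENNReal.ofReal (Real.exp ((|X i ω| / s i) ^ a)) ∂μ) ^ n⁻¹ := by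
        refine ENNReal.lintegral_prod_norm_pow_le _ (fun i _ => ?_) (by simp [n])
          fun _ _ => by positivity
        fun_prop
    _ ≤ ∏ _i : ι, (2 : ℝ≥0∞) ^ n⁻¹ := by
        gcongr with i
        simp_rw [← hrescale]
        exact (ht i).2.2
    _ = 2 := by
        rw [Finset.prod_const, Finset.card_univ, ENNReal.rpow_inv_natCast_pow Fintype.card_ne_zero]

theorem psiNorm_prod_le {a : ℝ} {X : ι → Ω → ℝ} (hX : ∀ i, AEMeasurable (X i) μ)
    (hfin : ∀ i, psiNorm a μ (X i) ≠ ∞) :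
    psiNorm (a / Fintype.card ι) μ (fun ω => ∏ i, X i ω) ≤ ∏ i, psiNorm a μ (X i) :=
  ENNReal.le_prod_sInf hfin fun _ ht => sInf_le (prod_mem_psiAdmissible hX ht)

end PsiNorm

theorem orlicz_norm_of_products_general
    {Ω : Type*} [MeasurableSpace Ω] (μ : Measure Ω)
    (α : ℝ) (N : ℕ) (hN : 1 ≤ N)
    (X : Fin N → Ω → ℝ) (hmeas : ∀ i, Measurable (X i))
    (hfin : ∀ i, psiNorm α μ (X i) < ∞) :
    psiNorm (α / N) μ (fun ω => ∏ i, X i ω) ≤ ∏ i, psiNorm α μ (X i) := by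
  have : Nonempty (Fin N) := ⟨⟨0, hN⟩⟩
  simpa using psiNorm_prod_le (fun i => (hmeas i).aemeasurable) fun i => (hfin i).ne

/-- Orlicz norm of products of random variables. -/
theorem orlicz_norm_of_products
    {Ω : Type*} [MeasurableSpace Ω] (μ : Measure Ω) [IsProbabilityMeasure μ]
    (α : ℝ) (hα : α ∈ Set.Ioc (0 : ℝ) 2) (N : ℕ) (hN : 1 ≤ N)
    (X : Fin N → Ω → ℝ) (hmeas : ∀ i, Measurable (X i))
    (hfin : ∀ i, psiNorm α μ (X i) < ∞) :
    psiNorm (α / N) μ (fun ω => ∏ i, X i ω) ≤ ∏ i, psiNorm α μ (X i) :=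
  orlicz_norm_of_products_general μ α N hN X hmeas hfin
end
end
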